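/- arXiv:1608.04457 — 3 statements merged into one kernel-verified Lean document; each statement's English description precedes it below -/
import Mathlib

section
/- Let (Ω, F, P) be a probability space, d ≥ 1 fixed, and (p_n) a sequence of integers with p_n ≥ d + 2 and m_n := min{n, p_n} → ∞. For each n let λ̂_1(n) ≥ λ̂_2(n) ≥ ... ≥ λ̂_{p_n}(n) ≥ 0 be random variables (e.g. the ordered eigenvalues of YYᵀ/(np_n) in an approximate factor model with d common factors). Assume: (a) there is κ > 0 with P(λ̂_d(n) ≥ κ) → 1; and (b) m_n·λ̂_{d+1}(n) = O_p(1), i.e. for every ε > 0 there is C > 0 with P(m_n·λ̂_{d+1}(n) > C) ≤ ε for all n. Let c(n), c̃(n) > 0 with c(n) → 0, c̃(n) → 0 and c(n)·c̃(n)·m_n → ∞, and fix τ ∈ (0, 1). Define ŝ_j(n) = λ̂_j(n)/(1 + λ̂_j(n)), ŝ*_j(n) = (ŝ_j(n) + c(n))/(ŝ_{j+1}(n) + c(n)) − 1, r_j(n) = (ŝ*_{j+1}(n) + c̃(n))/(ŝ*_j(n) + c̃(n)), and S_n = {j ∈ {1, ..., p_n − 2} : r_j(n) ≤ τ}. Then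 P(S_n is nonempty and max S_n = d) → 1 as n → ∞. -/
/-!
On the event `{λ̂_d ≥ κ} ∩ {m λ̂_{d+1} ≤ C}`, whose probability is eventually at least `1 - ε`,
write `δ = C / m`. Then `ŝ*_j ≤ δ / c` for every `j > d`, while `ŝ*_d ≥ (κ/(1+κ) - δ)/(δ + c)`
blows up. Since `δ / c = o(c̃)` (this is `c c̃ m → ∞`), the ratio `r_d` tends to `0`, whereas
`r_j ≥ c̃ / (δ / c + c̃) → 1 > τ` for all `j > d`; hence `d` is the largest index with `r_j ≤ τ`.
-/

open Filter MeasureTheory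
open scoped ENNReal Topology

/-- `ŝ_j = λ̂_j / (1 + λ̂_j)`. -/
noncomputable def sHat (lam : ℕ → ℝ) (j : ℕ) : ℝ := lam j / (1 + lam j)

/-- Factor-model first-round ridge ratio `ŝ*_j = (ŝ_j + c)/(ŝ_{j+1} + c) − 1`
(first powers rather than squares). -/
noncomputable def sStarF (lam : ℕ → ℝ) (c : ℝ) (j : ℕ) : ℝ :=
  (sHat lam j + c) / (sHat lam (j + 1) + c) - 1

/-- Factor-model second-round ridge ratio `r_j = (ŝ*_{j+1} + c̃)/(ŝ*_j + c̃)`. -/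
noncomputable def rRatioF (lam : ℕ → ℝ) (c ct : ℝ) (j : ℕ) : ℝ :=
  (sStarF lam c (j + 1) + ct) / (sStarF lam c j + ct)

lemma div_one_add_le_div_one_add {a b : ℝ} (ha : 0 ≤ a) (hab : a ≤ b) :
    a / (1 + a) ≤ b / (1 + b) := by
  rw [div_le_div_iff₀ (by linarith) (by linarith)]
  linarith

section RidgeRatios

variable {lam : ℕ → ℝ} {c ct τ κ δ : ℝ} {p d j : ℕ}

lemma sHat_nonneg (h : 0 ≤ lam j) : 0 ≤ sHat lam j :=
  div_nonneg h (by linarith)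

lemma sHat_le_self (h : 0 ≤ lam j) : sHat lam j ≤ lam j :=
  div_le_self h (by linarith)

lemma sHat_le_sHat {i : ℕ} (h0 : 0 ≤ lam j) (h : lam j ≤ lam i) : sHat lam j ≤ sHat lam i :=
  div_one_add_le_div_one_add h0 h

lemma sStarF_eq_div (h : sHat lam (j + 1) + c ≠ 0) :
    sStarF lam c j = (sHat lam j - sHat lam (j + 1)) / (sHat lam (j + 1) + c) := by
  unfold sStarF
  field_simp
  ring

lemma sStarF_nonneg (hc : 0 < c) (h0 : 0 ≤ lam (j + 1)) (h : lam (j + 1) ≤ lam j) :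
    0 ≤ sStarF lam c j := by
  have hden : 0 < sHat lam (j + 1) + c := by linarith [sHat_nonneg h0]
  rw [sStarF_eq_div hden.ne']
  exact div_nonneg (by linarith [sHat_le_sHat h0 h]) hden.le

lemma sStarF_le_div (hc : 0 < c) (h0 : 0 ≤ lam (j + 1)) (h : lam (j + 1) ≤ lam j)
    (hδ : lam j ≤ δ) : sStarF lam c j ≤ δ / c := by
  have hs : 0 ≤ sHat lam (j + 1) := sHat_nonneg h0
  rw [sStarF_eq_div (by linarith)]
  apply div_le_div₀ (by linarith) _ hc (by linarith)
  linarith [sHat_le_self (h0.trans h)]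

lemma div_le_sStarF (hc : 0 < c) (hκ : 0 ≤ κ) (hj : κ ≤ lam j) (h0 : 0 ≤ lam (j + 1))
    (h : lam (j + 1) ≤ lam j) (hδ : lam (j + 1) ≤ δ) :
    (κ / (1 + κ) - δ) / (δ + c) ≤ sStarF lam c j := by
  have hs : 0 ≤ sHat lam (j + 1) := sHat_nonneg h0
  have hκj : κ / (1 + κ) ≤ sHat lam j := div_one_add_le_div_one_add hκ hj
  have hgap : sHat lam (j + 1) ≤ sHat lam j := sHat_le_sHat h0 h
  rw [sStarF_eq_div (by linarith)]
  apply div_le_div₀ (by linarith) _ (by linarith) (by linarith [sHat_le_self h0])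
  linarith [sHat_le_self h0]

variable (hanti : AntitoneOn lam (Set.Icc 1 p)) (hnn : ∀ j ∈ Set.Icc 1 p, 0 ≤ lam j)
include hanti hnn

lemma rRatioF_le_of_gap (hd : 1 ≤ d) (hp : d + 2 ≤ p) (hc : 0 < c) (hct : 0 < ct)
    (hτ : 0 ≤ τ) (hκ : 0 ≤ κ) (hlamd : κ ≤ lam d) (hδ : lam (d + 1) ≤ δ)
    (hmem : (δ / c + ct) * (δ + c) ≤ τ * (κ / (1 + κ) - δ)) :
    rRatioF lam c ct d ≤ τ := by
  have h1 : 0 ≤ lam (d + 1) := hnn _ ⟨by omega, by omega⟩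
  have h2 : 0 ≤ lam (d + 2) := hnn _ ⟨by omega, by omega⟩
  have h21 : lam (d + 2) ≤ lam (d + 1) := hanti ⟨by omega, by omega⟩ ⟨by omega, hp⟩ (by omega)
  have h1d : lam (d + 1) ≤ lam d := hanti ⟨hd, by omega⟩ ⟨by omega, by omega⟩ (by omega)
  have hnext : sStarF lam c (d + 1) ≤ δ / c := sStarF_le_div hc h2 h21 hδ
  have hcur : (κ / (1 + κ) - δ) / (δ + c) ≤ sStarF lam c d :=
    div_le_sStarF hc hκ hlamd h1 h1d hδ
  have hcur0 : 0 ≤ sStarF lam c d := sStarF_nonneg hc h1 h1d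
  unfold rRatioF
  rw [div_le_iff₀ (by linarith)]
  calc sStarF lam c (d + 1) + ct ≤ δ / c + ct := by linarith
    _ ≤ τ * ((κ / (1 + κ) - δ) / (δ + c)) := by
        rw [mul_div_assoc', le_div_iff₀ (by linarith)]
        exact hmem
    _ ≤ τ * sStarF lam c d := by gcongr
    _ ≤ τ * (sStarF lam c d + ct) := by gcongr; linarith

lemma lt_rRatioF_of_lt (hc : 0 < c) (hct : 0 < ct) (hτ : 0 ≤ τ) (hδ : lam (d + 1) ≤ δ)
    (hbeyond : τ * (δ / c + ct) < ct) (hdj : d < j) (hjp : j + 2 ≤ p) :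
    τ < rRatioF lam c ct j := by
  have h1 : 0 ≤ lam (j + 1) := hnn _ ⟨by omega, by omega⟩
  have h2 : 0 ≤ lam (j + 2) := hnn _ ⟨by omega, by omega⟩
  have h21 : lam (j + 2) ≤ lam (j + 1) := hanti ⟨by omega, by omega⟩ ⟨by omega, hjp⟩ (by omega)
  have h1j : lam (j + 1) ≤ lam j := hanti ⟨by omega, by omega⟩ ⟨by omega, by omega⟩ (by omega)
  have hjd : lam j ≤ lam (d + 1) := hanti ⟨by omega, by omega⟩ ⟨by omega, by omega⟩ (by omega)
  have hcur : sStarF lam c j ≤ δ / c := sStarF_le_div hc h1 h1j (hjd.trans hδ)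
  have hnext : 0 ≤ sStarF lam c (j + 1) := sStarF_nonneg hc h2 h21
  unfold rRatioF
  rw [lt_div_iff₀ (by linarith [sStarF_nonneg hc h1 h1j])]
  calc τ * (sStarF lam c j + ct) ≤ τ * (δ / c + ct) := by gcongr
    _ < ct := hbeyond
    _ ≤ sStarF lam c (j + 1) + ct := by linarith

lemma isGreatest_rRatioF_le (hd : 1 ≤ d) (hp : d + 2 ≤ p) (hc : 0 < c) (hct : 0 < ct)
    (hτ : 0 ≤ τ) (hκ : 0 ≤ κ) (hlamd : κ ≤ lam d) (hδ : lam (d + 1) ≤ δ)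
    (hmem : (δ / c + ct) * (δ + c) ≤ τ * (κ / (1 + κ) - δ))
    (hbeyond : τ * (δ / c + ct) < ct) :
    IsGreatest {j | 1 ≤ j ∧ j ≤ p - 2 ∧ rRatioF lam c ct j ≤ τ} d := by
  refine ⟨⟨hd, by omega, rRatioF_le_of_gap hanti hnn hd hp hc hct hτ hκ hlamd hδ hmem⟩, ?_⟩
  rintro j ⟨-, hjp, hrj⟩
  by_contra! hdj
  exact (lt_rRatioF_of_lt hanti hnn hc hct hτ hδ hbeyond hdj (by omega)).not_ge hrj

end RidgeRatios

lemma eventually_ridge_gap_conditions {m c ct : ℕ → ℝ} {C κ τ : ℝ}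
    (hm : Tendsto m atTop atTop) (hcpos : ∀ n, 0 < c n) (hctpos : ∀ n, 0 < ct n)
    (hc : Tendsto c atTop (𝓝 0)) (hct : Tendsto ct atTop (𝓝 0))
    (hccm : Tendsto (fun n => c n * ct n * m n) atTop atTop)
    (hκ : 0 < κ) (hτ0 : 0 < τ) (hτ1 : τ < 1) :
    ∀ᶠ n in atTop,
      (C / m n / c n + ct n) * (C / m n + c n) ≤ τ * (κ / (1 + κ) - C / m n) ∧
        τ * (C / m n / c n + ct n) < ct n := by
  set w := fun n => C / (c n * ct n * m n)
  have hsplit : ∀ n, C / m n / c n + ct n = ct n * (w n + 1) := by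
    intro n
    have := (hcpos n).ne'
    have := (hctpos n).ne'
    rcases eq_or_ne (m n) 0 with hmn | hmn
    · simp [w, hmn]
    · simp only [w]
      field_simp
  have hw : Tendsto w atTop (𝓝 0) := tendsto_const_nhds.div_atTop hccm
  have hδ : Tendsto (fun n => C / m n) atTop (𝓝 0) := tendsto_const_nhds.div_atTop hm
  have hlhs : Tendsto (fun n => ct n * (w n + 1) * (C / m n + c n)) atTop (𝓝 0) := by
    simpa using (hct.mul (hw.add_const 1)).mul (hδ.add hc)
  have hrhs : Tendsto (fun n => τ * (κ / (1 + κ) - C / m n)) atTop (𝓝 (τ * (κ / (1 + κ)))) := by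
    simpa using (hδ.const_sub (κ / (1 + κ))).const_mul τ
  have hτw : Tendsto (fun n => τ * (w n + 1)) atTop (𝓝 τ) := by
    simpa using (hw.add_const 1).const_mul τ
  filter_upwards [hlhs.eventually_lt hrhs (by positivity), hτw.eventually (gt_mem_nhds hτ1)]
    with n hmem hbeyond
  rw [hsplit, mul_left_comm τ]
  exact ⟨hmem.le, mul_lt_of_lt_one_right (hctpos n) hbeyond⟩

lemma tendsto_measure_one_of_eventually_inter_subset {Ω ι : Type*} [MeasurableSpace Ω]
    {P : Measure Ω} [IsProbabilityMeasure P] {l : Filter ι} {A E : ι → Set Ω}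
    (hA : Tendsto (fun i => P (A i)) l (𝓝 1))
    (hE : ∀ ε : ℝ≥0∞, 0 < ε → ∃ B : ι → Set Ω,
      (∀ i, P (B i)ᶜ ≤ ε) ∧ ∀ᶠ i in l, A i ∩ B i ⊆ E i) :
    Tendsto (fun i => P (E i)) l (𝓝 1) := by
  rw [ENNReal.tendsto_nhds ENNReal.one_ne_top]
  intro ε hε
  obtain ⟨B, hB, hsub⟩ := hE (ε / 2) (ENNReal.half_pos hε.ne')
  have hAε : ∀ᶠ i in l, 1 - ε / 2 < P (A i) :=
    hA.eventually (eventually_gt_nhds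
      (ENNReal.sub_lt_self ENNReal.one_ne_top one_ne_zero (ENNReal.half_pos hε.ne').ne'))
  filter_upwards [hsub, hAε] with i hi hAi
  refine ⟨tsub_le_iff_right.2 ?_, prob_le_one.trans le_self_add⟩
  calc 1 ≤ P (A i) + ε / 2 := tsub_le_iff_right.1 hAi.le
    _ ≤ P (A i ∩ B i) + P (B i)ᶜ + ε / 2 := by
        gcongr
        calc P (A i) ≤ P (A i ∩ B i) + P (A i \ B i) := measure_le_inter_add_sdiff P _ _
          _ ≤ P (A i ∩ B i) + P (B i)ᶜ := by gcongr; exact Set.sdiff_subset_compl _ _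
    _ ≤ P (E i) + ε / 2 + ε / 2 := by gcongr; exact hB i
    _ = P (E i) + ε := by rw [add_assoc, ENNReal.add_halves]

theorem tdrr_consistent_factor_general (Ω : Type*) [MeasurableSpace Ω]
    (P : Measure Ω) [IsProbabilityMeasure P]
    (d : ℕ) (hd : 1 ≤ d)
    (p : ℕ → ℕ) (hp : ∀ n, d + 2 ≤ p n)
    (hm : Tendsto (fun n => min n (p n)) atTop atTop)
    (lamhat : ℕ → ℕ → Ω → ℝ)
    (hsorted : ∀ n (ω : Ω) i j, 1 ≤ i → i ≤ j → j ≤ p n → lamhat n j ω ≤ lamhat n i ω)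
    (hnn : ∀ n j (ω : Ω), 1 ≤ j → j ≤ p n → 0 ≤ lamhat n j ω)
    (κ : ℝ) (hκ : 0 < κ)
    (hsignal : Tendsto (fun n => P {ω | κ ≤ lamhat n d ω}) atTop (nhds 1))
    (htail : ∀ ε : ℝ≥0∞, 0 < ε → ∃ C : ℝ, 0 < C ∧ ∀ n : ℕ,
      P {ω | C < (min n (p n) : ℝ) * lamhat n (d + 1) ω} ≤ ε)
    (c ct : ℕ → ℝ) (hcpos : ∀ n, 0 < c n) (hctpos : ∀ n, 0 < ct n)
    (hc : Tendsto c atTop (nhds 0)) (hct : Tendsto ct atTop (nhds 0))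
    (hccm : Tendsto (fun n => c n * ct n * (min n (p n) : ℝ)) atTop atTop)
    (τ : ℝ) (hτ0 : 0 < τ) (hτ1 : τ < 1) :
    Tendsto (fun n => P {ω |
        {j | 1 ≤ j ∧ j ≤ p n - 2 ∧
          rRatioF (fun i => lamhat n i ω) (c n) (ct n) j ≤ τ}.Nonempty ∧
        sSup {j | 1 ≤ j ∧ j ≤ p n - 2 ∧
          rRatioF (fun i => lamhat n i ω) (c n) (ct n) j ≤ τ} = d})
      atTop (nhds 1) := by
  have hm' : Tendsto (fun n : ℕ => (min n (p n) : ℝ)) atTop atTop := by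
    simpa only [Function.comp_def, Nat.cast_min] using
      (tendsto_natCast_atTop_atTop (R := ℝ)).comp hm
  refine tendsto_measure_one_of_eventually_inter_subset hsignal fun ε hε => ?_
  obtain ⟨C, -, hC⟩ := htail ε hε
  refine ⟨fun n => {ω | (min n (p n) : ℝ) * lamhat n (d + 1) ω ≤ C},
    fun n => by simpa only [Set.compl_ofPred, not_le] using hC n, ?_⟩
  filter_upwards [hm'.eventually_gt_atTop 0, eventually_ridge_gap_conditions (C := C) hm' hcpos
    hctpos hc hct hccm hκ hτ0 hτ1] with n hmn ⟨hmem, hbeyond⟩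
  rintro ω ⟨hωd, hωd1⟩
  have hgreatest := isGreatest_rRatioF_le (fun i hi j hj hij => hsorted n ω i j hi.1 hij hj.2)
    (fun j hj => hnn n j ω hj.1 hj.2) hd (hp n) (hcpos n) (hctpos n) hτ0.le hκ.le hωd
    ((le_div_iff₀' hmn).2 hωd1) hmem hbeyond
  exact ⟨hgreatest.nonempty, hgreatest.csSup_eq⟩

/-- Consistency of the TDRR estimate of the number of common factors in an approximate
factor model: with `m_n = min{n, p_n} → ∞`, random sorted eigenvalues
`λ̂_1(n) ≥ ... ≥ λ̂_{p_n}(n) ≥ 0` such that (a) `P(λ̂_d(n) ≥ κ) → 1` for some `κ > 0`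
and (b) `m_n·λ̂_{d+1}(n) = O_p(1)`, ridges `c(n) → 0`, `c̃(n) → 0` with
`c(n)·c̃(n)·m_n → ∞` and `τ ∈ (0,1)`, the probability that
`S_n = {j ∈ {1, ..., p_n − 2} : r_j(n) ≤ τ}` is nonempty with maximum `d`
tends to one. -/
theorem tdrr_consistent_factor (Ω : Type*) [MeasurableSpace Ω]
    (P : Measure Ω) [IsProbabilityMeasure P]
    (d : ℕ) (hd : 1 ≤ d)
    (p : ℕ → ℕ) (hp : ∀ n, d + 2 ≤ p n)
    (hm : Tendsto (fun n => min n (p n)) atTop atTop)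
    (lamhat : ℕ → ℕ → Ω → ℝ)
    (hmeas : ∀ n j, Measurable (lamhat n j))
    (hsorted : ∀ n (ω : Ω) i j, 1 ≤ i → i ≤ j → j ≤ p n → lamhat n j ω ≤ lamhat n i ω)
    (hnn : ∀ n j (ω : Ω), 1 ≤ j → j ≤ p n → 0 ≤ lamhat n j ω)
    (κ : ℝ) (hκ : 0 < κ)
    (hsignal : Tendsto (fun n => P {ω | κ ≤ lamhat n d ω}) atTop (nhds 1))
    (htail : ∀ ε : ℝ≥0∞, 0 < ε → ∃ C : ℝ, 0 < C ∧ ∀ n : ℕ,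
      P {ω | C < (min n (p n) : ℝ) * lamhat n (d + 1) ω} ≤ ε)
    (c ct : ℕ → ℝ) (hcpos : ∀ n, 0 < c n) (hctpos : ∀ n, 0 < ct n)
    (hc : Tendsto c atTop (nhds 0)) (hct : Tendsto ct atTop (nhds 0))
    (hccm : Tendsto (fun n => c n * ct n * (min n (p n) : ℝ)) atTop atTop)
    (τ : ℝ) (hτ0 : 0 < τ) (hτ1 : τ < 1) :
    Tendsto (fun n => P {ω |
        {j | 1 ≤ j ∧ j ≤ p n - 2 ∧
          rRatioF (fun i => lamhat n i ω) (c n) (ct n) j ≤ τ}.Nonempty ∧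
        sSup {j | 1 ≤ j ∧ j ≤ p n - 2 ∧
          rRatioF (fun i => lamhat n i ω) (c n) (ct n) j ≤ τ} = d})
      atTop (nhds 1) :=
  tdrr_consistent_factor_general Ω P d hd p hp hm lamhat hsorted hnn κ hκ hsignal htail c ct hcpos
    hctpos hc hct hccm τ hτ0 hτ1
end

section
/- Let d ≥ 1 be fixed and (p_n) a sequence of integers with p_n ≥ d + 2 and m_n := min{n, p_n} → ∞. For each n let λ̂_1(n) ≥ λ̂_2(n) ≥ ... ≥ λ̂_{p_n}(n) ≥ 0 be real numbers such that λ̂_d(n) ≥ κ for all n, for some κ > 0, and λ̂_j(n) ≤ K/m_n for all j > d and all n, for some constant K. Let c(n), c̃(n) > 0 with c(n) → 0, c̃(n) → 0 and c(n)·c̃(n)·m_n → ∞, and fix τ ∈ (0, 1). Define ŝ_j(n) = λ̂_j(n)/(1 + λ̂_j(n)), ŝ*_j(n) = (ŝ_j(n) + c(n))/(ŝ_{j+1}(n) + c(n)) − 1, and r_j(n) = (ŝ*_{j+1}(n) + c̃(n))/(ŝ*_j(n) + c̃(n)). Then there exists N such that for all n ≥ N: r_d(n) ≤ τ and r_j(n)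 > τ for every j with d < j ≤ p_n − 2; consequently the set {j ∈ {1, ..., p_n − 2} : r_j(n) ≤ τ} is nonempty and its maximum equals d. -/
open Filter

set_option maxHeartbeats 1600000 in
/-- TDRR identifies the number of common factors `d` in the factor-model setting:
with `m_n = min{n, p_n} → ∞`, sorted eigenvalues `λ̂_1(n) ≥ ... ≥ λ̂_{p_n}(n) ≥ 0`,
`λ̂_d(n) ≥ κ > 0` and `λ̂_j(n) ≤ K/m_n` for `j > d`, and ridges `c(n) → 0`, `c̃(n) → 0`,
`c(n)·c̃(n)·m_n → ∞`: eventually `r_d(n) ≤ τ` and `r_j(n) > τ` for `d < j ≤ p_n − 2`;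
consequently the set `{j ∈ {1, ..., p_n − 2} : r_j(n) ≤ τ}` is nonempty
with maximum `d`. -/
theorem tdrr_identifies_d_factor (d : ℕ) (hd : 1 ≤ d)
    (p : ℕ → ℕ) (hp : ∀ n, d + 2 ≤ p n)
    (hm : Tendsto (fun n => min n (p n)) atTop atTop)
    (lamhat : ℕ → ℕ → ℝ)
    (hsorted : ∀ n i j, 1 ≤ i → i ≤ j → j ≤ p n → lamhat n j ≤ lamhat n i)
    (hnn : ∀ n j, 1 ≤ j → j ≤ p n → 0 ≤ lamhat n j)
    (κ : ℝ) (hκ : 0 < κ) (hsignal : ∀ n, κ ≤ lamhat n d)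
    (K : ℝ)
    (htail : ∀ n, 1 ≤ n → ∀ j, d < j → j ≤ p n →
      lamhat n j ≤ K / (min n (p n) : ℝ))
    (c ct : ℕ → ℝ) (hcpos : ∀ n, 0 < c n) (hctpos : ∀ n, 0 < ct n)
    (hc : Tendsto c atTop (nhds 0)) (hct : Tendsto ct atTop (nhds 0))
    (hccm : Tendsto (fun n => c n * ct n * (min n (p n) : ℝ)) atTop atTop)
    (τ : ℝ) (hτ0 : 0 < τ) (hτ1 : τ < 1) :
    ∃ N, ∀ n, N ≤ n →
      rRatioF (lamhat n) (c n) (ct n) d ≤ τ ∧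
      (∀ j, d < j → j ≤ p n - 2 → τ < rRatioF (lamhat n) (c n) (ct n) j) ∧
      {j | 1 ≤ j ∧ j ≤ p n - 2 ∧ rRatioF (lamhat n) (c n) (ct n) j ≤ τ}.Nonempty ∧
      sSup {j | 1 ≤ j ∧ j ≤ p n - 2 ∧ rRatioF (lamhat n) (c n) (ct n) j ≤ τ} = d := by

  set κ' : ℝ := κ / (1 + κ) with hκ'def
  have hκ'pos : 0 < κ' := div_pos hκ (by linarith)
  set K' : ℝ := max K 1 with hK'def
  have hK'pos : (0:ℝ) < K' := lt_of_lt_of_le one_pos (le_max_right _ _)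
  set m : ℕ → ℝ := fun k => (min k (p k) : ℝ) with hmdef
  have hm' : Tendsto m atTop atTop := by
    have h := (tendsto_natCast_atTop_atTop (R := ℝ)).comp hm
    refine h.congr fun k => ?_
    simp [hmdef, Nat.cast_min, Function.comp]
  have hct1 : ∀ᶠ k in atTop, ct k < 1 := hct.eventually_lt_const one_pos
  have hmc : Tendsto (fun k => m k * c k) atTop atTop := by
    refine tendsto_atTop_mono' atTop ?_ hccm
    filter_upwards [hct1, hm'.eventually_ge_atTop 0] with k h1 h2
    have hc0 := (hcpos k).le
    have hct0 := (hctpos k).le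
    show c k * ct k * m k ≤ m k * c k
    nlinarith [mul_nonneg (mul_nonneg hc0 h2) (show (0:ℝ) ≤ 1 - ct k by linarith)]
  have hKmc : Tendsto (fun k => K' / (m k * c k)) atTop (nhds 0) :=
    tendsto_const_nhds.div_atTop hmc
  have hKm : Tendsto (fun k => K' / m k) atTop (nhds 0) :=
    tendsto_const_nhds.div_atTop hm'
  have hbig : ∀ᶠ k in atTop,
      (1 : ℕ) ≤ min k (p k) ∧ K' / m k ≤ κ' / 2 ∧ K' / m k + c k ≤ 1 ∧
      K' / (m k * c k) + ct k ≤ τ * κ' / 2 ∧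
      K' * τ / (1 - τ) + 1 ≤ c k * ct k * m k := by
    have e1 : ∀ᶠ k in atTop, (1:ℕ) ≤ min k (p k) := hm.eventually_ge_atTop 1
    have e2 : ∀ᶠ k in atTop, K' / m k ≤ κ' / 2 :=
      hKm.eventually_le_const (show (0:ℝ) < κ' / 2 by positivity)
    have e3 : ∀ᶠ k in atTop, K' / m k + c k ≤ 1 := by
      have h0 : Tendsto (fun k => K' / m k + c k) atTop (nhds 0) := by
        simpa using hKm.add hc
      exact h0.eventually_le_const (show (0:ℝ) < 1 by norm_num)
    have e4 : ∀ᶠ k in atTop, K' / (m k * c k) + ct k ≤ τ * κ' / 2 := by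
      have h0 : Tendsto (fun k => K' / (m k * c k) + ct k) atTop (nhds 0) := by
        simpa using hKmc.add hct
      exact h0.eventually_le_const (show (0:ℝ) < τ * κ' / 2 by positivity)
    have e5 : ∀ᶠ k in atTop, K' * τ / (1 - τ) + 1 ≤ c k * ct k * m k :=
      hccm.eventually_ge_atTop _
    filter_upwards [e1, e2, e3, e4, e5] with k h1 h2 h3 h4 h5
    exact ⟨h1, h2, h3, h4, h5⟩
  have hK'geK : K ≤ K' := le_max_left K 1
  have hmeq : ∀ k : ℕ, (min k (p k) : ℝ) = m k := fun k => rfl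
  clear_value κ' K' m
  obtain ⟨N, hN⟩ := eventually_atTop.mp hbig
  refine ⟨N, fun n hn => ?_⟩
  obtain ⟨h1, h2, h3, h4, h5⟩ := hN n hn
  have hn1 : 1 ≤ n := le_trans h1 (Nat.min_le_left _ _)
  have hm1 : (1:ℝ) ≤ m n := by
    rw [← hmeq n]
    have : ((1:ℕ):ℝ) ≤ ((min n (p n) : ℕ) : ℝ) := Nat.cast_le.mpr h1
    simpa [Nat.cast_min] using this
  have hmpos : (0:ℝ) < m n := lt_of_lt_of_le one_pos hm1
  have hcn := hcpos n
  have hctn := hctpos n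
  have hpn := hp n
  -- facts about sHat
  have hs_nonneg : ∀ j, 1 ≤ j → j ≤ p n → 0 ≤ sHat (lamhat n) j := by
    intro j hj1 hj2
    have h0 := hnn n j hj1 hj2
    exact div_nonneg h0 (by linarith)
  have hs_mono : ∀ i j, 1 ≤ i → i ≤ j → j ≤ p n →
      sHat (lamhat n) j ≤ sHat (lamhat n) i := by
    intro i j hi hij hj
    have hli := hnn n i hi (le_trans hij hj)
    have hlj := hnn n j (le_trans hi hij) hj
    have hle := hsorted n i j hi hij hj
    unfold sHat
    rw [div_le_div_iff₀ (by linarith) (by linarith)]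
    nlinarith
  have hs_d : κ' ≤ sHat (lamhat n) d := by
    have hld := hsignal n
    rw [hκ'def]
    unfold sHat
    rw [div_le_div_iff₀ (by linarith) (by nlinarith)]
    nlinarith
  have hs_tail : ∀ j, d < j → j ≤ p n → sHat (lamhat n) j ≤ K' / m n := by
    intro j hj1 hj2
    have hl0 := hnn n j (by omega) hj2
    calc sHat (lamhat n) j ≤ lamhat n j := div_le_self hl0 (by linarith)
      _ ≤ K / m n := hmeq n ▸ htail n hn1 j hj1 hj2
      _ ≤ K' / m n := (div_le_div_iff_of_pos_right hmpos).mpr hK'geK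
  -- rewrite of sStarF
  have hS_rw : ∀ j, j + 1 ≤ p n → 1 ≤ j → sStarF (lamhat n) (c n) j =
      (sHat (lamhat n) j - sHat (lamhat n) (j+1)) / (sHat (lamhat n) (j+1) + c n) := by
    intro j hj2 hj1
    have hden : 0 < sHat (lamhat n) (j+1) + c n := by
      have := hs_nonneg (j+1) (by omega) hj2
      linarith
    unfold sStarF
    rw [div_sub_one hden.ne']
    ring_nf
  have hS_nonneg : ∀ j, 1 ≤ j → j + 1 ≤ p n → 0 ≤ sStarF (lamhat n) (c n) j := by
    intro j hj1 hj2
    rw [hS_rw j hj2 hj1]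
    have hden : 0 < sHat (lamhat n) (j+1) + c n := by
      have := hs_nonneg (j+1) (by omega) hj2
      linarith
    have hmon := hs_mono j (j+1) hj1 (by omega) hj2
    exact div_nonneg (by linarith) hden.le
  have hS_tail : ∀ j, d < j → j + 1 ≤ p n →
      sStarF (lamhat n) (c n) j ≤ K' / (m n * c n) := by
    intro j hj1 hj2
    rw [hS_rw j hj2 (by omega)]
    have hs1 := hs_nonneg (j+1) (by omega) hj2
    have hsj := hs_tail j hj1 (by omega)
    have hsj0 := hs_nonneg j (by omega) (by omega)
    calc (sHat (lamhat n) j - sHat (lamhat n) (j+1)) / (sHat (lamhat n) (j+1) + c n)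
        ≤ (K' / m n) / c n := by
          apply div_le_div₀ (by positivity) (by linarith) hcn (by linarith)
      _ = K' / (m n * c n) := by rw [div_div]
  have hS_d : κ' / 2 / (K' / m n + c n) ≤ sStarF (lamhat n) (c n) d := by
    rw [hS_rw d (by omega) hd]
    have hs1 := hs_tail (d+1) (by omega) (by omega)
    have hs10 := hs_nonneg (d+1) (by omega) (by omega)
    apply div_le_div₀ (by nlinarith) (by nlinarith) (by linarith) (by linarith)
  -- claim A : r_d ≤ τ
  have hSd_pos : 0 < sStarF (lamhat n) (c n) d + ct n := by
    have := hS_nonneg d hd (by omega)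
    linarith
  have claimA : rRatioF (lamhat n) (c n) (ct n) d ≤ τ := by
    unfold rRatioF
    rw [div_le_iff₀ hSd_pos]
    have hS1 : sStarF (lamhat n) (c n) (d+1) ≤ K' / (m n * c n) :=
      hS_tail (d+1) (by omega) (by omega)
    have key1 : sStarF (lamhat n) (c n) (d+1) + ct n ≤ τ * κ' / 2 := by linarith
    have hden_pos : 0 < K' / m n + c n :=
      add_pos (div_pos hK'pos hmpos) hcn
    have key2 : κ' / 2 ≤ κ' / 2 / (K' / m n + c n) := by
      rw [le_div_iff₀ hden_pos]
      nlinarith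
    have key3 : τ * (κ' / 2) ≤ τ * sStarF (lamhat n) (c n) d :=
      mul_le_mul_of_nonneg_left (le_trans key2 hS_d) hτ0.le
    nlinarith [mul_pos hτ0 hctn]
  -- claim B : τ < r_j for d < j ≤ p n - 2
  have claimB : ∀ j, d < j → j ≤ p n - 2 → τ < rRatioF (lamhat n) (c n) (ct n) j := by
    intro j hj1 hj2
    have hj2' : j + 2 ≤ p n := by omega
    have hSj : sStarF (lamhat n) (c n) j ≤ K' / (m n * c n) :=
      hS_tail j hj1 (by omega)
    have hSj1 : 0 ≤ sStarF (lamhat n) (c n) (j+1) :=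
      hS_nonneg (j+1) (by omega) (by omega)
    have hSjn : 0 ≤ sStarF (lamhat n) (c n) j :=
      hS_nonneg j (by omega) (by omega)
    have hden : 0 < sStarF (lamhat n) (c n) j + ct n := by linarith
    unfold rRatioF
    rw [lt_div_iff₀ hden]
    have h5a : K' * τ / (1 - τ) < c n * ct n * m n := by linarith
    have h5b : K' * τ < c n * ct n * m n * (1 - τ) := by
      rw [div_lt_iff₀ (by linarith)] at h5a
      linarith
    have key : τ * (K' / (m n * c n)) < (1 - τ) * ct n := by
      rw [mul_div_assoc', div_lt_iff₀ (mul_pos hmpos hcn)]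
      nlinarith
    nlinarith [mul_le_mul_of_nonneg_left hSj hτ0.le]
  -- membership of d
  have hd_mem : d ∈ {j | 1 ≤ j ∧ j ≤ p n - 2 ∧ rRatioF (lamhat n) (c n) (ct n) j ≤ τ} :=
    ⟨hd, by omega, claimA⟩
  have hub : ∀ j ∈ {j | 1 ≤ j ∧ j ≤ p n - 2 ∧ rRatioF (lamhat n) (c n) (ct n) j ≤ τ},
      j ≤ d := by
    rintro j ⟨hj1, hj2, hj3⟩
    by_contra hcon
    push_neg at hcon
    exact absurd hj3 (not_le.mpr (claimB j hcon hj2))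
  refine ⟨claimA, claimB, ⟨d, hd_mem⟩, ?_⟩
  exact le_antisymm (csSup_le ⟨d, hd_mem⟩ hub) (le_csSup ⟨d, hub⟩ hd_mem)
end

section
/- Let (Ω, F, P) be a probability space, let p ≥ q₁ + 2 with q₁ ≥ 1, and let M be a real symmetric positive semidefinite p×p matrix with exactly q₁ nonzero eigenvalues. Let (C_n) be a sequence of nonnegative reals with C_n ≤ K₀·n^{−1/2} for some constant K₀, and for each n let M_n : Ω → (real symmetric p×p matrices) be measurable with ‖M_n − M‖_F = O_p(max{C_n, n^{−1/2}}), i.e. for every ε > 0 there exists C > 0 such that P(‖M_n − M‖_F > C·max{C_n, n^{−1/2}}) ≤ ε for all n. Let λ̂_j(n) = λ_j(M_n), let c₁(n), c₂(n) > 0 with c₁(n) → 0, c₂(n) → 0 and n·c₁(n)·c₂(n) → ∞, and fix τ ∈ (0, 1). Define ŝ_j(n) = λ̂_j(n)/(1 + λ̂_j(n)), ŝ*_j(n) = (ŝ_j(n)² + c₁(n))/(ŝ_{j+1}(n)² + c₁(n)) − 1, r_j(n) = (ŝ*_{j+1}(n) + c₂(n))/(ŝ*_j(n) + c₂(n)),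 and S_n = {j ∈ {1, ..., p − 2} : r_j(n) ≤ τ}. Then P(S_n is nonempty and max S_n = q₁) → 1 as n → ∞. -/
open Filter MeasureTheory
open scoped Classical ENNReal

/-- The `i`-th largest eigenvalue (1-based, counted with multiplicity) of a real
symmetric `k × k` matrix; junk value `0` if `A` is not symmetric or `i` is out of range. -/
noncomputable def eigDesc {k : ℕ} (A : Matrix (Fin k) (Fin k) ℝ) (i : ℕ) : ℝ :=
  if h : A.IsHermitian ∧ i - 1 < k then
    h.1.eigenvalues (Tuple.sort h.1.eigenvalues (Fin.rev ⟨i - 1, h.2⟩))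
  else 0

/-- The Frobenius norm of a real matrix. -/
noncomputable def frobNorm {m n : ℕ} (C : Matrix (Fin m) (Fin n) ℝ) : ℝ :=
  Real.sqrt (∑ i, ∑ j, (C i j) ^ 2)

/-- First-round ridge ratio `ŝ*_j = (ŝ_j² + c₁)/(ŝ_{j+1}² + c₁) − 1`. -/
noncomputable def sStar (lam : ℕ → ℝ) (c1 : ℝ) (j : ℕ) : ℝ :=
  ((sHat lam j) ^ 2 + c1) / ((sHat lam (j + 1)) ^ 2 + c1) - 1

/-- Second-round ridge ratio `r_j = (ŝ*_{j+1} + c₂)/(ŝ*_j + c₂)`. -/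
noncomputable def rRatio (lam : ℕ → ℝ) (c1 c2 : ℝ) (j : ℕ) : ℝ :=
  (sStar lam c1 (j + 1) + c2) / (sStar lam c1 j + c2)

/-!
Weyl's inequality `|λ_j(A) - λ_j(B)| ≤ ‖A - B‖_F`, proved by intersecting the span of the top
eigenvectors of `A` with the span of the bottom eigenvectors of `B`, puts every `λ̂_j(n)` within
`δ_n = O(n^{-1/2})` of `λ_j(M)` outside an event of probability at most `ε`. There
`ŝ_j² ≤ 4 δ_n²` for `j > q₁` while `ŝ_{q₁}²` stays bounded below, so `|ŝ*_j| ≤ 4 δ_n² / c₁ = o(c₂)`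
for `j > q₁` (this is where `n c₁ c₂ → ∞` enters) and `ŝ*_{q₁} ≳ 1 / c₁`. Hence
`r_{q₁} ≤ 2 c₂ / ŝ*_{q₁} → 0`, whereas `r_j → 1 > τ` for every `j > q₁`.
-/

open Matrix
open scoped RealInnerProductSpace

section OrthonormalBasis

variable {ι E : Type*} [Fintype ι] [NormedAddCommGroup E] [InnerProductSpace ℝ E]

lemma OrthonormalBasis.repr_eq_zero_of_mem_span (b : OrthonormalBasis ι ℝ E) {s : Set ι} {x : E}
    (hx : x ∈ Submodule.span ℝ (b '' s)) {j : ι} (hj : j ∉ s) : b.repr x j = 0 := by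
  rw [b.repr_apply_apply]
  induction hx using Submodule.span_induction with
  | mem y hy =>
    obtain ⟨i, hi, rfl⟩ := hy
    exact b.orthonormal.2 fun hji => hj (hji ▸ hi)
  | zero => exact inner_zero_right _
  | add y z _ _ hy hz => rw [inner_add_right, hy, hz, add_zero]
  | smul c y _ hy => rw [inner_smul_right, hy, mul_zero]

lemma OrthonormalBasis.sum_mul_repr_sq_le_of_mem_span (b : OrthonormalBasis ι ℝ E) {s : Set ι}
    {x : E} (hx : x ∈ Submodule.span ℝ (b '' s)) {f g : ι → ℝ} (hfg : ∀ i ∈ s, f i ≤ g i) :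
    ∑ i, f i * b.repr x i ^ 2 ≤ ∑ i, g i * b.repr x i ^ 2 := by
  refine Finset.sum_le_sum fun i _ => ?_
  by_cases hi : i ∈ s
  · exact mul_le_mul_of_nonneg_right (hfg i hi) (sq_nonneg _)
  · simp [b.repr_eq_zero_of_mem_span hx hi]

lemma OrthonormalBasis.norm_sq_eq_sum_repr_sq (b : OrthonormalBasis ι ℝ E) (x : E) :
    ‖x‖ ^ 2 = ∑ i, b.repr x i ^ 2 := by
  rw [← b.repr.norm_map, EuclideanSpace.real_norm_sq_eq]

lemma OrthonormalBasis.finrank_span_image (b : OrthonormalBasis ι ℝ E) (s : Finset ι) :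
    Module.finrank ℝ (Submodule.span ℝ (b '' s)) = s.card := by
  rw [Set.image_eq_range, finrank_span_eq_card (b := fun i : (s : Set ι) => b i)
    (b.orthonormal.linearIndependent.comp _ Subtype.val_injective)]
  simp

end OrthonormalBasis

lemma Submodule.exists_mem_inf_ne_zero_of_finrank_lt {K V : Type*} [DivisionRing K]
    [AddCommGroup V] [Module K V] [FiniteDimensional K V] {U W : Submodule K V}
    (h : Module.finrank K V < Module.finrank K U + Module.finrank K W) :
    ∃ x ∈ U, x ∈ W ∧ x ≠ 0 := by
  by_contra! H
  exact h.not_ge (Submodule.finrank_add_finrank_le_of_disjoint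
    (Submodule.disjoint_def.2 fun x hU hW => H x hU hW))

lemma frobNorm_sub_comm {m n : ℕ} (A B : Matrix (Fin m) (Fin n) ℝ) :
    frobNorm (A - B) = frobNorm (B - A) := by
  rw [← neg_sub]
  simp only [frobNorm, Matrix.neg_apply, neg_sq]

lemma norm_toEuclideanLin_le_frobNorm {m n : ℕ} (A : Matrix (Fin m) (Fin n) ℝ)
    (x : EuclideanSpace ℝ (Fin n)) : ‖toEuclideanLin A x‖ ≤ frobNorm A * ‖x‖ := by
  refine (pow_le_pow_iff_left₀ (norm_nonneg _) (by unfold frobNorm; positivity)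
    two_ne_zero).1 ?_
  rw [mul_pow, frobNorm, Real.sq_sqrt (by positivity), EuclideanSpace.real_norm_sq_eq,
    EuclideanSpace.real_norm_sq_eq, Finset.sum_mul]
  refine Finset.sum_le_sum fun i _ => ?_
  simpa [toEuclideanLin, mulVec, dotProduct] using
    Finset.sum_mul_sq_le_sq_mul_sq Finset.univ (A i) x

namespace Matrix.IsHermitian

section

variable {n : Type*} [Fintype n] [DecidableEq n] {A : Matrix n n ℝ}

lemma inner_toEuclideanLin_self (hA : A.IsHermitian) (x : EuclideanSpace ℝ n) :
    ⟪x, toEuclideanLin A x⟫ = ∑ i, hA.eigenvalues i * hA.eigenvectorBasis.repr x i ^ 2 := by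
  rw [← hA.eigenvectorBasis.sum_inner_mul_inner]
  refine Finset.sum_congr rfl fun i _ => ?_
  have hAi : toEuclideanLin A (hA.eigenvectorBasis i) = hA.eigenvalues i • hA.eigenvectorBasis i :=
    congrArg (WithLp.toLp 2) (hA.mulVec_eigenvectorBasis i)
  rw [← isSymmetric_toEuclideanLin_iff.2 hA, hAi, real_inner_smul_left, real_inner_comm,
    hA.eigenvectorBasis.repr_apply_apply]
  ring

lemma le_inner_toEuclideanLin_self (hA : A.IsHermitian) {s : Set n} {t : ℝ}
    (ht : ∀ i ∈ s, t ≤ hA.eigenvalues i) {x : EuclideanSpace ℝ n}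
    (hx : x ∈ Submodule.span ℝ (hA.eigenvectorBasis '' s)) :
    t * ‖x‖ ^ 2 ≤ ⟪x, toEuclideanLin A x⟫ := by
  rw [hA.inner_toEuclideanLin_self, hA.eigenvectorBasis.norm_sq_eq_sum_repr_sq, Finset.mul_sum]
  exact hA.eigenvectorBasis.sum_mul_repr_sq_le_of_mem_span hx ht

lemma inner_toEuclideanLin_self_le (hA : A.IsHermitian) {s : Set n} {t : ℝ}
    (ht : ∀ i ∈ s, hA.eigenvalues i ≤ t) {x : EuclideanSpace ℝ n}
    (hx : x ∈ Submodule.span ℝ (hA.eigenvectorBasis '' s)) :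
    ⟪x, toEuclideanLin A x⟫ ≤ t * ‖x‖ ^ 2 := by
  rw [hA.inner_toEuclideanLin_self, hA.eigenvectorBasis.norm_sq_eq_sum_repr_sq, Finset.mul_sum]
  exact hA.eigenvectorBasis.sum_mul_repr_sq_le_of_mem_span hx ht

end

lemma eigenvalues_sort_sub_le_frobNorm {n : ℕ} {A B : Matrix (Fin n) (Fin n) ℝ}
    (hA : A.IsHermitian) (hB : B.IsHermitian) (k : Fin n) :
    hA.eigenvalues (Tuple.sort hA.eigenvalues k) - hB.eigenvalues (Tuple.sort hB.eigenvalues k)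
      ≤ frobNorm (A - B) := by
  set σA := Tuple.sort hA.eigenvalues
  set σB := Tuple.sort hB.eigenvalues
  -- the top `n - k` eigenvectors of `A` and the bottom `k + 1` of `B` span subspaces that meet
  obtain ⟨x, hxA, hxB, hx0⟩ := Submodule.exists_mem_inf_ne_zero_of_finrank_lt
    (U := Submodule.span ℝ (hA.eigenvectorBasis '' ↑((Finset.Ici k).image σA)))
    (W := Submodule.span ℝ (hB.eigenvectorBasis '' ↑((Finset.Iic k).image σB))) (by
      rw [OrthonormalBasis.finrank_span_image, OrthonormalBasis.finrank_span_image,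
        Finset.card_image_of_injective _ σA.injective,
        Finset.card_image_of_injective _ σB.injective, Fin.card_Ici, Fin.card_Iic,
        finrank_euclideanSpace_fin]
      omega)
  have hlow := hA.le_inner_toEuclideanLin_self (t := hA.eigenvalues (σA k)) (by
    simp only [Finset.coe_image, Set.forall_mem_image, Finset.coe_Ici, Set.mem_Ici]
    exact fun i hi => Tuple.monotone_sort hA.eigenvalues hi) hxA
  have hhigh := hB.inner_toEuclideanLin_self_le (t := hB.eigenvalues (σB k)) (by
    simp only [Finset.coe_image, Set.forall_mem_image, Finset.coe_Iic, Set.mem_Iic]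
    exact fun i hi => Tuple.monotone_sort hB.eigenvalues hi) hxB
  have hdiff : ⟪x, toEuclideanLin (A - B) x⟫ ≤ frobNorm (A - B) * ‖x‖ ^ 2 := by
    calc _ ≤ ‖x‖ * ‖toEuclideanLin (A - B) x‖ := real_inner_le_norm _ _
      _ ≤ ‖x‖ * (frobNorm (A - B) * ‖x‖) := by
          gcongr; exact norm_toEuclideanLin_le_frobNorm _ _
      _ = frobNorm (A - B) * ‖x‖ ^ 2 := by ring
  rw [map_sub, LinearMap.sub_apply, inner_sub_right] at hdiff
  exact le_of_mul_le_mul_right (by rw [sub_mul]; linarith) (by positivity : 0 < ‖x‖ ^ 2)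

end Matrix.IsHermitian

lemma abs_eigDesc_sub_le_frobNorm {n : ℕ} {A B : Matrix (Fin n) (Fin n) ℝ} (hA : A.IsHermitian)
    (hB : B.IsHermitian) (i : ℕ) : |eigDesc A i - eigDesc B i| ≤ frobNorm (A - B) := by
  unfold eigDesc
  by_cases hi : i - 1 < n
  · rw [dif_pos ⟨hA, hi⟩, dif_pos ⟨hB, hi⟩, abs_sub_le_iff]
    exact ⟨hA.eigenvalues_sort_sub_le_frobNorm hB _,
      (hB.eigenvalues_sort_sub_le_frobNorm hA _).trans_eq (frobNorm_sub_comm B A)⟩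
  · rw [dif_neg (hi ·.2), dif_neg (hi ·.2), sub_zero, abs_zero]
    exact Real.sqrt_nonneg _

section RidgeRatios

variable {lam : ℕ → ℝ} {j : ℕ}

lemma sq_sHat_le {δ : ℝ} (hδ : δ ≤ 1 / 2) (hj : |lam j| ≤ δ) : sHat lam j ^ 2 ≤ (2 * δ) ^ 2 := by
  have h1 : 1 / 2 ≤ 1 + lam j := by linarith [neg_abs_le (lam j)]
  have h2 : |sHat lam j| ≤ 2 * δ := by
    rw [sHat, abs_div, abs_of_pos (show 0 < 1 + lam j by linarith), div_le_iff₀ (by linarith)]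
    nlinarith [abs_nonneg (lam j)]
  exact sq_le_sq' (by linarith [neg_abs_le (sHat lam j)]) (le_of_abs_le h2)

lemma sq_div_one_add_le_sq_sHat {a : ℝ} (ha : 0 ≤ a) (hj : a ≤ lam j) :
    (a / (1 + a)) ^ 2 ≤ sHat lam j ^ 2 := by
  have : a / (1 + a) ≤ sHat lam j := by
    rw [sHat, div_le_div_iff₀ (by linarith) (by linarith)]
    nlinarith
  exact pow_le_pow_left₀ (by positivity) this 2

lemma sStar_eq {c1 : ℝ} (hc1 : 0 < c1) (j : ℕ) :
    sStar lam c1 j = (sHat lam j ^ 2 - sHat lam (j + 1) ^ 2) / (sHat lam (j + 1) ^ 2 + c1) := by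
  rw [sStar, div_sub_one (by positivity)]
  ring

lemma abs_sStar_le {c1 η : ℝ} (hc1 : 0 < c1) (hj : sHat lam j ^ 2 ≤ η)
    (hj1 : sHat lam (j + 1) ^ 2 ≤ η) : |sStar lam c1 j| ≤ η / c1 := by
  rw [sStar_eq hc1, abs_div, abs_of_pos (show 0 < sHat lam (j + 1) ^ 2 + c1 by positivity)]
  exact div_le_div₀ (by linarith [sq_nonneg (sHat lam j)])
    (abs_sub_le_iff.2 ⟨by linarith [sq_nonneg (sHat lam (j + 1))],
      by linarith [sq_nonneg (sHat lam j)]⟩) hc1 (by linarith [sq_nonneg (sHat lam (j + 1))])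

lemma div_le_sStar {c1 β η : ℝ} (hc1 : 0 < c1) (hj : β ≤ sHat lam j ^ 2)
    (hj1 : sHat lam (j + 1) ^ 2 ≤ η) (hηβ : η ≤ β) : (β - η) / (η + c1) ≤ sStar lam c1 j := by
  rw [sStar_eq hc1]
  exact div_le_div₀ (by linarith) (by linarith) (by positivity) (by linarith)

lemma rRatio_le {c1 c2 τ L : ℝ} (hc2 : 0 < c2) (hτ : 0 ≤ τ) (hj : L ≤ sStar lam c1 j)
    (hj1 : sStar lam c1 (j + 1) ≤ c2) (h : 2 * c2 ≤ τ * L) : rRatio lam c1 c2 j ≤ τ := by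
  have hL : 0 < L := pos_of_mul_pos_right (by linarith) hτ
  rw [rRatio, div_le_iff₀ (by linarith)]
  nlinarith

lemma lt_rRatio {c1 c2 τ e : ℝ} (hc2 : 0 < c2) (hτ : 0 ≤ τ) (hj : |sStar lam c1 j| ≤ e)
    (hj1 : |sStar lam c1 (j + 1)| ≤ e) (h : e * (1 + τ) < c2 * (1 - τ)) :
    τ < rRatio lam c1 c2 j := by
  obtain ⟨hj, hj'⟩ := abs_le.1 hj
  have he : 0 ≤ e := (abs_nonneg _).trans hj1
  rw [rRatio, lt_div_iff₀ (by nlinarith)]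
  nlinarith [(abs_le.1 hj1).1]

end RidgeRatios

def tdrrSet (p : ℕ) (lam : ℕ → ℝ) (c1 c2 τ : ℝ) : Set ℕ :=
  {j | 1 ≤ j ∧ j ≤ p - 2 ∧ rRatio lam c1 c2 j ≤ τ}

lemma isGreatest_tdrrSet {p q : ℕ} (hq : 1 ≤ q) (hqp : q + 2 ≤ p) {lam : ℕ → ℝ}
    {c1 c2 τ β η : ℝ} (hc1 : 0 < c1) (hc2 : 0 < c2) (hτ : 0 ≤ τ)
    (hβ : β ≤ sHat lam q ^ 2) (hη : ∀ j, q < j → j ≤ p → sHat lam j ^ 2 ≤ η) (hηβ : η < β)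
    (hnoise : η / (c1 * c2) * (1 + τ) < 1 - τ) (hsignal : 2 * c2 * (η + c1) ≤ τ * (β - η)) :
    IsGreatest (tdrrSet p lam c1 c2 τ) q := by
  have hη0 : 0 ≤ η := (sq_nonneg _).trans (hη (q + 1) (by omega) (by omega))
  have hstar : ∀ j, q < j → j + 1 ≤ p → |sStar lam c1 j| ≤ η / c1 := fun j hj hjp =>
    abs_sStar_le hc1 (hη j hj (by omega)) (hη (j + 1) (by omega) hjp)
  have hnoise' : η / c1 * (1 + τ) < c2 * (1 - τ) := by
    calc η / c1 * (1 + τ) = c2 * (η / (c1 * c2) * (1 + τ)) := by field_simp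
      _ < c2 * (1 - τ) := mul_lt_mul_of_pos_left hnoise hc2
  refine ⟨⟨hq, by omega, rRatio_le hc2 hτ (div_le_sStar hc1 hβ (hη _ (by omega) (by omega)) hηβ.le)
    ((le_abs_self _).trans ((hstar _ (by omega) (by omega)).trans (by nlinarith))) ?_⟩, ?_⟩
  · rwa [mul_div_assoc', le_div_iff₀ (by positivity)]
  · rintro j ⟨-, hjp, hr⟩
    by_contra! hqj
    exact hr.not_gt (lt_rRatio hc2 hτ (hstar j hqj (by omega))
      (hstar (j + 1) (by omega) (by omega)) hnoise')

lemma eventually_isGreatest_tdrrSet {p q : ℕ} (hq : 1 ≤ q) (hqp : q + 2 ≤ p) {μ : ℕ → ℝ}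
    (hμq : 0 < μ q) (hμ0 : ∀ j, q < j → j ≤ p → μ j = 0) {c1 c2 δ : ℕ → ℝ}
    (hc1pos : ∀ n, 0 < c1 n) (hc2pos : ∀ n, 0 < c2 n)
    (hc1 : Tendsto c1 atTop (nhds 0)) (hc2 : Tendsto c2 atTop (nhds 0))
    (hδ : Tendsto (fun n => δ n ^ 2 / (c1 n * c2 n)) atTop (nhds 0)) {τ : ℝ} (hτ0 : 0 < τ)
    (hτ1 : τ < 1) :
    ∀ᶠ n in atTop, ∀ lam : ℕ → ℝ, (∀ j, 1 ≤ j → j ≤ p → |lam j - μ j| ≤ δ n) →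
      IsGreatest (tdrrSet p lam (c1 n) (c2 n) τ) q := by
  set β := (μ q / 2 / (1 + μ q / 2)) ^ 2
  have hβ : 0 < β := by positivity
  have hδsq : Tendsto (fun n => (2 * δ n) ^ 2) atTop (nhds 0) := by
    have h := (hδ.mul (hc1.mul hc2)).const_mul 4
    simp only [mul_zero] at h
    refine h.congr fun n => ?_
    field_simp [(hc1pos n).ne', (hc2pos n).ne']
    ring
  have hsmall : ∀ᶠ n in atTop, (2 * δ n) ^ 2 < min 1 (μ q) ^ 2 :=
    hδsq.eventually_lt_const (by positivity)
  have hηβ : ∀ᶠ n in atTop, (2 * δ n) ^ 2 < β := hδsq.eventually_lt_const hβ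
  have hnoise : ∀ᶠ n in atTop, (2 * δ n) ^ 2 / (c1 n * c2 n) * (1 + τ) < 1 - τ := by
    refine Tendsto.eventually_lt_const (show (0 : ℝ) < 1 - τ by linarith) ?_
    simpa using ((hδ.const_mul 4).mul_const (1 + τ)).congr fun n => by ring
  have hsignal : ∀ᶠ n in atTop, 2 * c2 n * ((2 * δ n) ^ 2 + c1 n) < τ * (β - (2 * δ n) ^ 2) := by
    refine Tendsto.eventually_lt (y := 0) (z := τ * β) ?_ ?_ (by positivity)
    · simpa using (hc2.const_mul 2).mul (hδsq.add hc1)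
    · simpa using (hδsq.const_sub β).const_mul τ
  filter_upwards [hsmall, hηβ, hnoise, hsignal] with n hsmall hηβ hnoise hsignal lam hlam
  have hδ' : 2 * δ n < min 1 (μ q) := (abs_lt_of_sq_lt_sq' hsmall (by positivity)).2
  refine isGreatest_tdrrSet hq hqp (hc1pos n) (hc2pos n) hτ0.le
    (sq_div_one_add_le_sq_sHat (by positivity) ?_) (fun j hj hjp => sq_sHat_le ?_ ?_) hηβ hnoise
    hsignal.le
  · linarith [(abs_le.1 (hlam q hq (by omega))).1, min_le_right 1 (μ q)]
  · linarith [min_le_left 1 (μ q)]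
  · simpa [hμ0 j hj hjp] using hlam j (by omega) hjp

/-- `X n = O_p(r n)` along `n ≥ 1`. -/
def IsBigOInProbability {Ω : Type*} [MeasurableSpace Ω] (P : Measure Ω) (X : ℕ → Ω → ℝ)
    (r : ℕ → ℝ) : Prop :=
  ∀ ε : ℝ≥0∞, 0 < ε → ∃ C : ℝ, 0 < C ∧ ∀ n : ℕ, 1 ≤ n → P {ω | C * r n < X n ω} ≤ ε

lemma IsBigOInProbability.tendsto_measure_one {Ω : Type*} [MeasurableSpace Ω] {P : Measure Ω}
    [IsProbabilityMeasure P] {X : ℕ → Ω → ℝ} {r : ℕ → ℝ} (hX : IsBigOInProbability P X r)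
    {G : ℕ → Set Ω} (hG : ∀ C : ℝ, 0 < C → ∀ᶠ n in atTop, {ω | X n ω ≤ C * r n} ⊆ G n) :
    Tendsto (fun n => P (G n)) atTop (nhds 1) := by
  rw [ENNReal.tendsto_nhds ENNReal.one_ne_top]
  intro ε hε
  obtain ⟨C, hC, hCP⟩ := hX ε hε
  filter_upwards [hG C hC, eventually_ge_atTop 1] with n hsub hn
  have hcompl : P (G n)ᶜ ≤ ε := by
    refine (measure_mono fun ω hω => ?_).trans (hCP n hn)
    exact not_le.1 fun h => hω (hsub (Set.mem_ofPred.2 h))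
  have hcover : 1 ≤ P (G n) + P (G n)ᶜ := measure_univ (μ := P) ▸ measure_univ_le_add_compl _
  refine ⟨?_, prob_le_one.trans le_self_add⟩
  calc 1 - ε ≤ 1 - P (G n)ᶜ := tsub_le_tsub_left hcompl 1
    _ ≤ P (G n) := tsub_le_iff_right.2 hcover

lemma tendsto_div_sqrt_sq_div_zero {c : ℕ → ℝ}
    (hc : Tendsto (fun n : ℕ => (n : ℝ) * c n) atTop atTop) (D : ℝ) :
    Tendsto (fun n : ℕ => (D / Real.sqrt n) ^ 2 / c n) atTop (nhds 0) := by
  refine ((tendsto_const_nhds (x := D ^ 2)).div_atTop hc).congr fun n => ?_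
  rw [div_pow, Real.sq_sqrt (Nat.cast_nonneg n), div_div]

theorem tdrr_consistent_fast_local_drift_general (Ω : Type*) [MeasurableSpace Ω]
    (P : Measure Ω) [IsProbabilityMeasure P]
    (p q₁ : ℕ) (hq₁ : 1 ≤ q₁) (hpq : q₁ + 2 ≤ p)
    (M : Matrix (Fin p) (Fin p) ℝ) (hM : M.PosSemidef)
    (heigpos : 0 < eigDesc M q₁) (heigzero : ∀ j, q₁ < j → j ≤ p → eigDesc M j = 0)
    (Cn : ℕ → ℝ)
    (K₀ : ℝ) (hCn : ∀ n : ℕ, 1 ≤ n → Cn n ≤ K₀ / Real.sqrt n)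
    (Mn : ℕ → Ω → Matrix (Fin p) (Fin p) ℝ)
    (hherm : ∀ n ω, (Mn n ω).IsHermitian)
    (hOp : ∀ ε : ℝ≥0∞, 0 < ε → ∃ C : ℝ, 0 < C ∧ ∀ n : ℕ, 1 ≤ n →
      P {ω | C * max (Cn n) (1 / Real.sqrt n) < frobNorm (Mn n ω - M)} ≤ ε)
    (c1 c2 : ℕ → ℝ) (hc1pos : ∀ n, 0 < c1 n) (hc2pos : ∀ n, 0 < c2 n)
    (hc1 : Tendsto c1 atTop (nhds 0)) (hc2 : Tendsto c2 atTop (nhds 0))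
    (hncc : Tendsto (fun n : ℕ => (n : ℝ) * c1 n * c2 n) atTop atTop)
    (τ : ℝ) (hτ0 : 0 < τ) (hτ1 : τ < 1) :
    Tendsto (fun n => P {ω |
        {j | 1 ≤ j ∧ j ≤ p - 2 ∧
          rRatio (fun i => eigDesc (Mn n ω) i) (c1 n) (c2 n) j ≤ τ}.Nonempty ∧
        sSup {j | 1 ≤ j ∧ j ≤ p - 2 ∧
          rRatio (fun i => eigDesc (Mn n ω) i) (c1 n) (c2 n) j ≤ τ} = q₁})
      atTop (nhds 1) := by
  refine IsBigOInProbability.tendsto_measure_one hOp fun C hC => ?_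
  set K := max K₀ 1
  have hrate := tendsto_div_sqrt_sq_div_zero (c := fun n => c1 n * c2 n)
    (by simpa only [mul_assoc] using hncc) (C * K)
  filter_upwards [eventually_isGreatest_tdrrSet hq₁ hpq heigpos heigzero hc1pos hc2pos hc1 hc2
    hrate hτ0 hτ1, eventually_ge_atTop 1] with n htdrr hn ω hω
  have hmax : C * max (Cn n) (1 / Real.sqrt n) ≤ C * K / Real.sqrt n := by
    rw [mul_div_assoc]
    gcongr
    exact max_le ((hCn n hn).trans (by gcongr; exact le_max_left _ _))
      (by gcongr; exact le_max_right _ _)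
  have h := htdrr _ fun j _ _ =>
    (abs_eigDesc_sub_le_frobNorm (hherm n ω) hM.isHermitian j).trans (hω.trans hmax)
  exact ⟨h.nonempty, h.csSup_eq⟩

/-- Consistency of the TDRR estimate under local alternatives drifting at rate
`C_n ≤ K₀·n^{−1/2}`: if the random symmetric matrices `M n` converge to the rank-`q₁`
positive semidefinite matrix `M` at rate `O_p(max{C_n, n^{−1/2}})` in Frobenius norm,
`c₁(n) → 0`, `c₂(n) → 0`, `n·c₁(n)·c₂(n) → ∞`, and `τ ∈ (0,1)`, then with probability
tending to one the TDRR set `S_n = {j ∈ {1, ..., p − 2} : r_j(n) ≤ τ}` is nonempty with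
maximum `q₁`. -/
theorem tdrr_consistent_fast_local_drift (Ω : Type*) [MeasurableSpace Ω]
    (P : Measure Ω) [IsProbabilityMeasure P]
    (p q₁ : ℕ) (hq₁ : 1 ≤ q₁) (hpq : q₁ + 2 ≤ p)
    (M : Matrix (Fin p) (Fin p) ℝ) (hM : M.PosSemidef)
    (heigpos : 0 < eigDesc M q₁) (heigzero : ∀ j, q₁ < j → j ≤ p → eigDesc M j = 0)
    (Cn : ℕ → ℝ) (hCnn : ∀ n, 0 ≤ Cn n)
    (K₀ : ℝ) (hCn : ∀ n : ℕ, 1 ≤ n → Cn n ≤ K₀ / Real.sqrt n)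
    (Mn : ℕ → Ω → Matrix (Fin p) (Fin p) ℝ)
    (hmeas : ∀ n i j, Measurable (fun ω => Mn n ω i j))
    (hherm : ∀ n ω, (Mn n ω).IsHermitian)
    (hOp : ∀ ε : ℝ≥0∞, 0 < ε → ∃ C : ℝ, 0 < C ∧ ∀ n : ℕ, 1 ≤ n →
      P {ω | C * max (Cn n) (1 / Real.sqrt n) < frobNorm (Mn n ω - M)} ≤ ε)
    (c1 c2 : ℕ → ℝ) (hc1pos : ∀ n, 0 < c1 n) (hc2pos : ∀ n, 0 < c2 n)
    (hc1 : Tendsto c1 atTop (nhds 0)) (hc2 : Tendsto c2 atTop (nhds 0))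
    (hncc : Tendsto (fun n : ℕ => (n : ℝ) * c1 n * c2 n) atTop atTop)
    (τ : ℝ) (hτ0 : 0 < τ) (hτ1 : τ < 1) :
    Tendsto (fun n => P {ω |
        {j | 1 ≤ j ∧ j ≤ p - 2 ∧
          rRatio (fun i => eigDesc (Mn n ω) i) (c1 n) (c2 n) j ≤ τ}.Nonempty ∧
        sSup {j | 1 ≤ j ∧ j ≤ p - 2 ∧
          rRatio (fun i => eigDesc (Mn n ω) i) (c1 n) (c2 n) j ≤ τ} = q₁})
      atTop (nhds 1) :=
  tdrr_consistent_fast_local_drift_general Ω P p q₁ hq₁ hpq M hM heigpos heigzero Cn K₀ hCn Mn hherm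
    hOp c1 c2 hc1pos hc2pos hc1 hc2 hncc τ hτ0 hτ1
end
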